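/- arXiv:1401.0192 — 2 statements merged into one kernel-verified Lean document; each statement's English description precedes it below -/
import Mathlib

section
/- Under the Splitting Assumption, every limiting value x^(∞) of the (bounded) consistent representations (x^(k))_k of the Lloyd iterates has N pairwise distinct components; i.e., no two components of x^(∞) coincide. -/
/-!
If two components of the limit grid coincided, the limit grid would really be a grid of
`N - 1` points. By Fatou's lemma the distortion of the limit is at most the common bound `c`
of the distortions along the sequence, and `c` lies strictly below the optimal distortion at
level `N - 1`: a contradiction.
-/

open MeasureTheory Filter Topology

section MinSqDist

variable {E ι κ : Type*} [PseudoMetricSpace E]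

/-- For an empty grid this is the junk value `sInf ∅ = 0`. -/
noncomputable def minSqDist (v : ι → E) (a : E) : ℝ := ⨅ t, dist a (v t) ^ 2

lemma minSqDist_nonneg (v : ι → E) (a : E) : 0 ≤ minSqDist v a :=
  Real.iInf_nonneg fun _ => sq_nonneg _

lemma minSqDist_le (v : ι → E) (a : E) (t : ι) : minSqDist v a ≤ dist a (v t) ^ 2 :=
  ciInf_le ⟨0, Set.forall_mem_range.2 fun _ => sq_nonneg _⟩ t

lemma minSqDist_eq_of_range_eq {v : ι → E} {w : κ → E} (h : Set.range v = Set.range w) (a : E) :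
    minSqDist v a = minSqDist w a := by
  change sInf (Set.range ((dist a · ^ 2) ∘ v)) = sInf (Set.range ((dist a · ^ 2) ∘ w))
  rw [Set.range_comp, Set.range_comp, h]

lemma continuous_minSqDist [Finite ι] [Nonempty ι] :
    Continuous fun p : (ι → E) × E => minSqDist p.1 p.2 := by
  cases nonempty_fintype ι
  simp only [minSqDist, ← Finset.inf'_univ_eq_ciInf]
  exact Continuous.finset_inf'_apply Finset.univ_nonempty fun t _ =>
    ((continuous_snd.dist ((continuous_apply t).comp continuous_fst)).pow 2)

end MinSqDist

lemma range_comp_succAbove_of_apply_eq {α : Type*} {n : ℕ} {v : Fin (n + 1) → α}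
    {i j : Fin (n + 1)} (hij : i ≠ j) (h : v i = v j) : Set.range (v ∘ j.succAbove) = Set.range v := by
  refine (Set.range_comp_subset_range _ _).antisymm ?_
  rintro _ ⟨k, rfl⟩
  obtain ⟨l, hlj, hlk⟩ : ∃ l, l ≠ j ∧ v l = v k := by
    by_cases hk : k = j
    · exact ⟨i, hij, hk ▸ h⟩
    · exact ⟨k, hk, rfl⟩
  obtain ⟨t, rfl⟩ := Fin.exists_succAbove_eq hlj
  exact ⟨t, hlk⟩

section Quantization

variable {Ω : Type*} [MeasurableSpace Ω] (P : Measure Ω)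

theorem integral_le_of_tendsto_of_integral_le {f : ℕ → Ω → ℝ} {g : Ω → ℝ} {c : ℝ}
    (hf_nonneg : ∀ n, 0 ≤ᵐ[P] f n) (hf_int : ∀ n, Integrable (f n) P) (hg_int : Integrable g P)
    (hfg : ∀ᵐ ω ∂P, Tendsto (fun n => f n ω) atTop (𝓝 (g ω))) (hfc : ∀ n, ∫ ω, f n ω ∂P ≤ c) :
    ∫ ω, g ω ∂P ≤ c := by
  have hg_nonneg : 0 ≤ᵐ[P] g := by
    filter_upwards [hfg, ae_all_iff.2 hf_nonneg] with ω hω hω'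
    exact ge_of_tendsto' hω hω'
  have hc : 0 ≤ c := (integral_nonneg_of_ae (hf_nonneg 0)).trans (hfc 0)
  rw [← ENNReal.ofReal_le_ofReal_iff hc, ofReal_integral_eq_lintegral_ofReal hg_int hg_nonneg]
  calc ∫⁻ ω, ENNReal.ofReal (g ω) ∂P
      = ∫⁻ ω, liminf (fun n => ENNReal.ofReal (f n ω)) atTop ∂P := by
        refine lintegral_congr_ae ?_
        filter_upwards [hfg] with ω hω
        exact (ENNReal.tendsto_ofReal hω).liminf_eq.symm
    _ ≤ liminf (fun n => ∫⁻ ω, ENNReal.ofReal (f n ω) ∂P) atTop :=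
        lintegral_liminf_le' fun n => (hf_int n).aemeasurable.ennreal_ofReal
    _ ≤ ENNReal.ofReal c := by
        refine liminf_le_of_frequently_le' (Frequently.of_forall fun n => ?_)
        rw [← ofReal_integral_eq_lintegral_ofReal (hf_int n) (hf_nonneg n)]
        exact ENNReal.ofReal_le_ofReal (hfc n)

section Distortion

variable {E ι κ : Type*} [PseudoMetricSpace E]

noncomputable def distortion (X : Ω → E) (v : ι → E) : ℝ :=
  ∫ ω, minSqDist v (X ω) ∂P

lemma distortion_nonneg (X : Ω → E) (v : ι → E) : 0 ≤ distortion P X v :=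
  integral_nonneg fun _ => minSqDist_nonneg _ _

lemma sInf_le_distortion (X : Ω → E) (y : κ → E) :
    sInf {r : ℝ | ∃ y : κ → E, r = distortion P X y} ≤ distortion P X y :=
  csInf_le ⟨0, by rintro _ ⟨y, rfl⟩; exact distortion_nonneg P X y⟩ ⟨y, rfl⟩

lemma distortion_comp_succAbove_of_apply_eq (X : Ω → E) {n : ℕ}
    {v : Fin (n + 1) → E} {i j : Fin (n + 1)} (hij : i ≠ j) (h : v i = v j) :
    distortion P X (v ∘ j.succAbove) = distortion P X v := by
  simp only [distortion, minSqDist_eq_of_range_eq (range_comp_succAbove_of_apply_eq hij h)]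

end Distortion

section Integrable

variable {E ι : Type*} [NormedAddCommGroup E] [IsFiniteMeasure P] {X : Ω → E}

lemma integrable_minSqDist [Finite ι] [Nonempty ι] (hX : MemLp X 2 P) (v : ι → E) :
    Integrable (fun ω => minSqDist v (X ω)) P := by
  obtain ⟨t⟩ := ‹Nonempty ι›
  have hmeas : AEStronglyMeasurable (fun ω => minSqDist v (X ω)) P :=
    (continuous_minSqDist.comp₂ continuous_const continuous_id).comp_aestronglyMeasurable hX.1
  refine (hX.sub (memLp_const (v t))).norm.integrable_sq.mono' hmeas (ae_of_all _ fun ω => ?_)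
  rw [Real.norm_of_nonneg (minSqDist_nonneg _ _), Pi.sub_apply, ← dist_eq_norm]
  exact minSqDist_le v (X ω) t

lemma distortion_le_of_tendsto [Finite ι] [Nonempty ι] (hX : MemLp X 2 P) {v : ℕ → ι → E}
    {w : ι → E} (hv : Tendsto v atTop (𝓝 w)) {c : ℝ} (hc : ∀ n, distortion P X (v n) ≤ c) :
    distortion P X w ≤ c :=
  integral_le_of_tendsto_of_integral_le P (fun _ => ae_of_all _ fun _ => minSqDist_nonneg _ _)
    (fun n => integrable_minSqDist P hX (v n)) (integrable_minSqDist P hX w)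
    (ae_of_all _ fun _ =>
      ((continuous_minSqDist.comp₂ continuous_id continuous_const).tendsto w).comp hv) hc

end Integrable

end Quantization

theorem limit_components_pairwise_distinct_general
    {Ω : Type*} [MeasurableSpace Ω] (P : Measure Ω) [IsProbabilityMeasure P]
    {d N : ℕ}
    (X : Ω → EuclideanSpace ℝ (Fin d)) (hX : MemLp X 2 P)
    (c : ℝ)
    (hc : c < sInf {r : ℝ | ∃ y : Fin (N - 1) → EuclideanSpace ℝ (Fin d),
        r = ∫ ω, (⨅ j, dist (X ω) (y j) ^ 2) ∂P})
    (x : ℕ → Fin N → EuclideanSpace ℝ (Fin d))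
    (hG : ∀ k, ∫ ω, (⨅ i, dist (X ω) (x k i) ^ 2) ∂P ≤ c)
    (φ : ℕ → ℕ)
    (xlim : Fin N → EuclideanSpace ℝ (Fin d))
    (hlim : Tendsto (fun k => x (φ k)) atTop (𝓝 xlim)) :
    ∀ i j, i ≠ j → xlim i ≠ xlim j := by
  intro i j hij hxij
  obtain ⟨M, rfl⟩ := Nat.exists_eq_add_one_of_ne_zero (Fin.pos i).ne'
  have : Nonempty (Fin (M + 1)) := ⟨i⟩
  have hlim_le : distortion P X xlim ≤ c := distortion_le_of_tendsto P hX hlim fun k => hG (φ k)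
  refine lt_irrefl c (calc
    c < _ := hc
    _ ≤ distortion P X (xlim ∘ j.succAbove) := sInf_le_distortion P X _
    _ = distortion P X xlim := distortion_comp_succAbove_of_apply_eq P X hij hxij
    _ ≤ c := hlim_le)

/-- Under the splitting assumption (distortion level kept strictly below the optimal
distortion at level `N − 1`), every limit of a convergent subsequence of the iterates
has `N` pairwise distinct components. -/
theorem limit_components_pairwise_distinct
    {Ω : Type*} [MeasurableSpace Ω] (P : Measure Ω) [IsProbabilityMeasure P]
    {d N : ℕ} (hN : 1 < N)
    (X : Ω → EuclideanSpace ℝ (Fin d)) (hXm : Measurable X) (hX : MemLp X 2 P)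
    (c : ℝ)
    (hc : c < sInf {r : ℝ | ∃ y : Fin (N - 1) → EuclideanSpace ℝ (Fin d),
        r = ∫ ω, (⨅ j, dist (X ω) (y j) ^ 2) ∂P})
    (x : ℕ → Fin N → EuclideanSpace ℝ (Fin d))
    (hG : ∀ k, ∫ ω, (⨅ i, dist (X ω) (x k i) ^ 2) ∂P ≤ c)
    (φ : ℕ → ℕ) (hφ : StrictMono φ)
    (xlim : Fin N → EuclideanSpace ℝ (Fin d))
    (hlim : Tendsto (fun k => x (φ k)) atTop (𝓝 xlim)) :
    ∀ i j, i ≠ j → xlim i ≠ xlim j :=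
  limit_components_pairwise_distinct_general P X hX c hc x hG φ xlim hlim
end

section
/- For any N-tuple x = (x_1,...,x_N) of pairwise distinct points with P_X-negligible Voronoi cell boundaries, the gradient of the distortion function satisfies |∇𝒢(x)|² ≤ 4 𝒢(x), where 𝒢(x) = E min_{1≤i≤N}|X − x_i|² and ∂𝒢/∂x_i = 2 E[1_{X∈C_i(x)}(x_i − X)]. -/
/-!
On the cell `C i` the distortion integrand `min_j |X - x_j|²` equals `|X - x_i|²`, so the
distortion splits as `∑ᵢ E[1_{X ∈ C i} |X - x_i|²]`. Jensen (or Cauchy–Schwarz) on each cell,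
with `P(X ∈ C i) ≤ 1`, gives `|E[1_{X ∈ C i}(x_i - X)]|² ≤ E[1_{X ∈ C i} |X - x_i|²]`, and summing
over the cells yields the bound.
-/

open MeasureTheory Filter

section Integral

variable {Ω : Type*} [MeasurableSpace Ω] {μ : Measure Ω}

theorem sq_integral_le_integral_sq [IsProbabilityMeasure μ] {g : Ω → ℝ} (hg : MemLp g 2 μ) :
    (∫ ω, g ω ∂μ) ^ 2 ≤ ∫ ω, g ω ^ 2 ∂μ := by
  have h := ProbabilityTheory.variance_nonneg g μ
  rw [ProbabilityTheory.variance_eq_sub hg] at h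
  simpa [sub_nonneg] using h

theorem sq_norm_setIntegral_le [IsProbabilityMeasure μ] {E : Type*} [NormedAddCommGroup E]
    [NormedSpace ℝ E] {f : Ω → E} (hf : MemLp f 2 μ) {s : Set Ω} (hs : MeasurableSet s) :
    ‖∫ ω in s, f ω ∂μ‖ ^ 2 ≤ ∫ ω in s, ‖f ω‖ ^ 2 ∂μ := by
  have hg : MemLp (s.indicator fun ω => ‖f ω‖) 2 μ := hf.norm.indicator hs
  calc ‖∫ ω in s, f ω ∂μ‖ ^ 2 ≤ (∫ ω, s.indicator (fun ω => ‖f ω‖) ω ∂μ) ^ 2 := by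
        rw [integral_indicator hs]
        gcongr
        exact norm_integral_le_integral_norm _
    _ ≤ ∫ ω, s.indicator (fun ω => ‖f ω‖) ω ^ 2 ∂μ := sq_integral_le_integral_sq hg
    _ = ∫ ω in s, ‖f ω‖ ^ 2 ∂μ := by
        rw [← integral_indicator hs]
        congr 1 with ω
        by_cases hω : ω ∈ s <;> simp [hω]

theorem sum_setIntegral_of_existsUnique_mem {ι : Type*} [Fintype ι] {s : ι → Set Ω}
    (hs : ∀ i, MeasurableSet (s i)) (hpart : ∀ ω, ∃! i, ω ∈ s i) {E : Type*}
    [NormedAddCommGroup E] [NormedSpace ℝ E] {f : Ω → E}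
    (hf : Integrable f μ) : ∑ i, ∫ ω in s i, f ω ∂μ = ∫ ω, f ω ∂μ := by
  have hdisj : Pairwise (Function.onFun Disjoint s) := fun i j hij =>
    Set.disjoint_left.2 fun ω hi hj => hij ((hpart ω).unique hi hj)
  have hcover : ⋃ i, s i = Set.univ :=
    Set.eq_univ_of_forall fun ω => Set.mem_iUnion.2 (hpart ω).exists
  rw [← integral_iUnion_fintype hs hdisj fun _ => hf.integrableOn, hcover, Measure.restrict_univ]

end Integral

section Voronoi

variable {α ι : Type*} [PseudoMetricSpace α] [Finite ι]

theorem iInf_dist_sq_eq_of_forall_dist_le {x : ι → α} {ξ : α} {i : ι}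
    (h : ∀ j, dist ξ (x i) ≤ dist ξ (x j)) : ⨅ j, dist ξ (x j) ^ 2 = dist ξ (x i) ^ 2 :=
  have : Nonempty ι := ⟨i⟩
  le_antisymm (ciInf_le (Set.finite_range _).bddBelow i)
    (le_ciInf fun j => pow_le_pow_left₀ dist_nonneg (h j) 2)

theorem integrable_iInf_dist_sq [Nonempty ι] {Ω E : Type*} [MeasurableSpace Ω] {μ : Measure Ω}
    [IsFiniteMeasure μ] [NormedAddCommGroup E] [MeasurableSpace E] [BorelSpace E]
    {X : Ω → E} (hXm : Measurable X) (hX : MemLp X 2 μ) (x : ι → E) :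
    Integrable (fun ω => ⨅ j, dist (X ω) (x j) ^ 2) μ := by
  obtain ⟨i⟩ := ‹Nonempty ι›
  have hi : Integrable (fun ω => dist (X ω) (x i) ^ 2) μ := by
    simpa only [dist_eq_norm, Pi.sub_apply] using (hX.sub (memLp_const (x i))).norm.integrable_sq
  have hm : Measurable fun ω => ⨅ j, dist (X ω) (x j) ^ 2 := Measurable.iInf fun j =>
    ((continuous_id.dist continuous_const).pow 2).measurable.comp hXm
  refine hi.mono' hm.aestronglyMeasurable (Eventually.of_forall fun ω => ?_)
  rw [Real.norm_of_nonneg (le_ciInf fun j => by positivity)]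
  exact ciInf_le (Set.finite_range _).bddBelow i

end Voronoi

theorem distortion_gradient_bound_general
    {Ω : Type*} [MeasurableSpace Ω] (P : Measure Ω) [IsProbabilityMeasure P]
    {d N : ℕ}
    (X : Ω → EuclideanSpace ℝ (Fin d)) (hXm : Measurable X) (hX : MemLp X 2 P)
    (x : Fin N → EuclideanSpace ℝ (Fin d))
    (C : Fin N → Set (EuclideanSpace ℝ (Fin d)))
    (hCmeas : ∀ i, MeasurableSet (C i))
    (hCpart : ∀ ξ, ∃! i, ξ ∈ C i)
    (hCvor : ∀ i, ∀ ξ ∈ C i, ∀ j, dist ξ (x i) ≤ dist ξ (x j)) :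
    ∑ i, ‖(2 : ℝ) • ∫ ω in X ⁻¹' C i, (x i - X ω) ∂P‖ ^ 2
      ≤ 4 * ∫ ω, (⨅ i, dist (X ω) (x i) ^ 2) ∂P := by
  have : Nonempty (Fin N) := ⟨(hCpart 0).exists.choose⟩
  have hA : ∀ i, MeasurableSet (X ⁻¹' C i) := fun i => hXm (hCmeas i)
  have hcell : ∀ i, ∫ ω in X ⁻¹' C i, ‖x i - X ω‖ ^ 2 ∂P
      = ∫ ω in X ⁻¹' C i, ⨅ j, dist (X ω) (x j) ^ 2 ∂P := fun i =>
    setIntegral_congr_fun (hA i) fun ω hω => by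
      rw [iInf_dist_sq_eq_of_forall_dist_le (hCvor i _ hω), dist_eq_norm, norm_sub_rev]
  calc ∑ i, ‖(2 : ℝ) • ∫ ω in X ⁻¹' C i, (x i - X ω) ∂P‖ ^ 2
      = 4 * ∑ i, ‖∫ ω in X ⁻¹' C i, (x i - X ω) ∂P‖ ^ 2 := by
        simp only [norm_smul, mul_pow, Finset.mul_sum]
        norm_num
    _ ≤ 4 * ∑ i, ∫ ω in X ⁻¹' C i, ‖x i - X ω‖ ^ 2 ∂P := by
        gcongr with i
        exact sq_norm_setIntegral_le ((memLp_const (x i)).sub hX) (hA i)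
    _ = 4 * ∫ ω, (⨅ i, dist (X ω) (x i) ^ 2) ∂P := by
        simp_rw [hcell]
        rw [sum_setIntegral_of_existsUnique_mem hA (fun ω => hCpart (X ω))
          (integrable_iInf_dist_sq hXm hX x)]

/-- Gradient bound for the distortion: `|∇𝒢(x)|² ≤ 4 𝒢(x)`, where the `i`-th
component of the gradient is `2 E[1_{X ∈ C_i}(x_i − X)]`. -/
theorem distortion_gradient_bound
    {Ω : Type*} [MeasurableSpace Ω] (P : Measure Ω) [IsProbabilityMeasure P]
    {d N : ℕ} (hN : 0 < N)
    (X : Ω → EuclideanSpace ℝ (Fin d)) (hXm : Measurable X) (hX : MemLp X 2 P)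
    (x : Fin N → EuclideanSpace ℝ (Fin d))
    (hdistinct : ∀ i j, i ≠ j → x i ≠ x j)
    (C : Fin N → Set (EuclideanSpace ℝ (Fin d)))
    (hCmeas : ∀ i, MeasurableSet (C i))
    (hCpart : ∀ ξ, ∃! i, ξ ∈ C i)
    (hCvor : ∀ i, ∀ ξ ∈ C i, ∀ j, dist ξ (x i) ≤ dist ξ (x j))
    (hbd : P {ω | X ω ∈ ⋃ i, frontier (C i)} = 0) :
    ∑ i, ‖(2 : ℝ) • ∫ ω in X ⁻¹' C i, (x i - X ω) ∂P‖ ^ 2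
      ≤ 4 * ∫ ω, (⨅ i, dist (X ω) (x i) ^ 2) ∂P :=
  distortion_gradient_bound_general P X hXm hX x C hCmeas hCpart hCvor
end
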